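/- arXiv:1211.5983 — 3 statements merged into one kernel-verified Lean document; each statement's English description precedes it below -/
import Mathlib

section
/- For points P on side AC and R on side BC of a triangle ABC, and Q on the segment PR, the cube roots of the areas satisfy S(AQP)^{1/3} + S(BQR)^{1/3} ≤ S(ABC)^{1/3}. -/
/-!
Write `P = (1 - s) A + s C`, `R = (1 - t) C + t B` and `Q = (1 - u) P + u R`
with `s, t, u ∈ [0, 1]`. Areas of triangles with a common vertex and bases on one line scale
with the bases, which gives `S(AQP) = s u t · S(ABC)` and
`S(BQR) = (1 - s)(1 - u)(1 - t) · S(ABC)`. The claim thus reduces to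
`∛(s u t) + ∛((1 - s)(1 - u)(1 - t)) ≤ 1`, the sum of AM-GM for both products.
-/

/-- Doubled-free area of a triangle in the plane via the cross product. -/
noncomputable def triArea (A B C : ℝ × ℝ) : ℝ :=
  |(B.1 - A.1) * (C.2 - A.2) - (C.1 - A.1) * (B.2 - A.2)| / 2

open Set Real

lemma rpow_one_div_three_mul_le_add_div_three {a b c : ℝ} (ha : 0 ≤ a) (hb : 0 ≤ b)
    (hc : 0 ≤ c) : (a * b * c) ^ (1 / 3 : ℝ) ≤ (a + b + c) / 3 := by
  have h3 : (0 : ℝ) ≤ 1 / 3 := by norm_num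
  rw [mul_rpow (by positivity) hc, mul_rpow ha hb]
  linarith [geom_mean_le_arith_mean3_weighted h3 h3 h3 ha hb hc (by norm_num)]

lemma rpow_one_div_three_mul_add_one_sub_le_one {s t u : ℝ} (hs : s ∈ Icc (0 : ℝ) 1)
    (ht : t ∈ Icc (0 : ℝ) 1) (hu : u ∈ Icc (0 : ℝ) 1) :
    (s * u * t) ^ (1 / 3 : ℝ) + ((1 - s) * (1 - u) * (1 - t)) ^ (1 / 3 : ℝ) ≤ 1 := by
  linarith [rpow_one_div_three_mul_le_add_div_three hs.1 hu.1 ht.1,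
    rpow_one_div_three_mul_le_add_div_three (sub_nonneg.2 hs.2) (sub_nonneg.2 hu.2)
      (sub_nonneg.2 ht.2)]

def triCross (A B C : ℝ × ℝ) : ℝ :=
  (B.1 - A.1) * (C.2 - A.2) - (C.1 - A.1) * (B.2 - A.2)

lemma triArea_eq_of_triCross_eq {A B C X Y Z : ℝ × ℝ} {k : ℝ}
    (h : triCross X Y Z = k * triCross A B C) : triArea X Y Z = |k| * triArea A B C := by
  change |triCross X Y Z| / 2 = |k| * (|triCross A B C| / 2)
  rw [h, abs_mul, mul_div_assoc]

lemma triArea_nonneg (A B C : ℝ × ℝ) : 0 ≤ triArea A B C := by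
  unfold triArea; positivity

theorem stmt_0_general (A B C P Q R : ℝ × ℝ)
    (hP : P ∈ segment ℝ A C) (hR : R ∈ segment ℝ B C)
    (hQ : Q ∈ segment ℝ P R) :
    triArea A Q P ^ ((1:ℝ)/3) + triArea B Q R ^ ((1:ℝ)/3)
      ≤ triArea A B C ^ ((1:ℝ)/3) := by
  rw [segment_eq_image] at hP hQ
  rw [segment_symm, segment_eq_image] at hR
  obtain ⟨s, hs, hP⟩ := hP
  obtain ⟨t, ht, hR⟩ := hR
  obtain ⟨u, hu, hQ⟩ := hQ
  have hQP : triCross A Q P = s * u * t * triCross A B C := by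
    subst hP hR hQ
    simp only [triCross, Prod.fst_add, Prod.snd_add, Prod.smul_fst, Prod.smul_snd, smul_eq_mul]
    ring
  have hQR : triCross B Q R = -((1 - s) * (1 - u) * (1 - t)) * triCross A B C := by
    subst hP hR hQ
    simp only [triCross, Prod.fst_add, Prod.snd_add, Prod.smul_fst, Prod.smul_snd, smul_eq_mul]
    ring
  have hk₁ : 0 ≤ s * u * t := mul_nonneg (mul_nonneg hs.1 hu.1) ht.1
  have hk₂ : 0 ≤ (1 - s) * (1 - u) * (1 - t) :=
    mul_nonneg (mul_nonneg (sub_nonneg.2 hs.2) (sub_nonneg.2 hu.2)) (sub_nonneg.2 ht.2)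
  have hS := triArea_nonneg A B C
  rw [triArea_eq_of_triCross_eq hQP, triArea_eq_of_triCross_eq hQR, abs_neg, abs_of_nonneg hk₁,
    abs_of_nonneg hk₂, mul_rpow hk₁ hS, mul_rpow hk₂ hS, ← add_mul]
  exact mul_le_of_le_one_left (rpow_nonneg hS _)
    (rpow_one_div_three_mul_add_one_sub_le_one hs ht hu)

theorem stmt_0 (A B C P Q R : ℝ × ℝ)
    (hABC : ¬ Collinear ℝ ({A, B, C} : Set (ℝ × ℝ)))
    (hP : P ∈ segment ℝ A C) (hR : R ∈ segment ℝ B C)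
    (hQ : Q ∈ segment ℝ P R) :
    triArea A Q P ^ ((1:ℝ)/3) + triArea B Q R ^ ((1:ℝ)/3)
      ≤ triArea A B C ^ ((1:ℝ)/3) :=
  stmt_0_general A B C P Q R hP hR hQ
end

section
/- In the standard triangle A=(−1,1), B=(1,1), C=(0,−1), for Q=(t, t²+τ) with |t| ≤ 1/2 and |τ| ≤ δ ≤ 1/8, the line y = 2tx − t² + τ through Q meets segment AC at a point P and segment BC at a point R (not on extensions), and Q lies on segment PR. -/
open Set

lemma mem_segment_of_fst_mem_Icc {m c : ℝ} {p q r : ℝ × ℝ} (hp : p.2 = m * p.1 + c)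
    (hq : q.2 = m * q.1 + c) (hr : r.2 = m * r.1 + c) (h : r.1 ∈ Icc p.1 q.1) :
    r ∈ segment ℝ p q := by
  rw [← segment_eq_Icc (h.1.trans h.2)] at h
  obtain ⟨a, b, ha, hb, hab, hx⟩ := h
  refine ⟨a, b, ha, hb, hab, Prod.ext ?_ ?_⟩
  · simpa using hx
  · simp only [Prod.snd_add, Prod.smul_snd, smul_eq_mul]
    rw [hp, hq, hr, ← hx]
    linear_combination c * hab

/-- `y = -2x - 1` is the line through `A = (-1, 1)` and `C = (0, -1)`. -/
lemma exists_crossing_left {t τ : ℝ} (ht : -1 < t) (hτ₀ : t ^ 2 - 1 ≤ τ)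
    (hτ₁ : |τ| ≤ (t + 1) ^ 2) :
    ∃ x, -1 ≤ x ∧ x ≤ 0 ∧ x ≤ t ∧ 2 * t * x - t ^ 2 + τ = -2 * x - 1 := by
  obtain ⟨hτl, hτu⟩ := abs_le.mp hτ₁
  have hd : 0 < 2 * t + 2 := by linarith
  refine ⟨(t ^ 2 - τ - 1) / (2 * t + 2), ?_, ?_, ?_, ?_⟩
  · rw [le_div_iff₀ hd]; nlinarith
  · exact div_nonpos_of_nonpos_of_nonneg (by linarith) hd.le
  · rw [div_le_iff₀ hd]; nlinarith
  · linear_combination div_mul_cancel₀ (t ^ 2 - τ - 1) hd.ne'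

theorem stmt_18_general (t τ δ : ℝ) (ht : |t| ≤ 1/2) (hτ : |τ| ≤ δ)
    (hδ : δ ≤ 1/8) :
    let A : ℝ × ℝ := (-1, 1)
    let B : ℝ × ℝ := (1, 1)
    let C : ℝ × ℝ := (0, -1)
    let Q : ℝ × ℝ := (t, t ^ 2 + τ)
    ∃ P R : ℝ × ℝ, P ∈ segment ℝ A C ∧ R ∈ segment ℝ B C ∧
      P.2 = 2 * t * P.1 - t ^ 2 + τ ∧ R.2 = 2 * t * R.1 - t ^ 2 + τ ∧
      Q ∈ segment ℝ P R := by
  intro A B C Q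
  obtain ⟨ht₀, ht₁⟩ := abs_le.mp ht
  obtain ⟨hτ₀, hτ₁⟩ := abs_le.mp (hτ.trans hδ)
  obtain ⟨xP, hP₀, hP₁, hPt, hP⟩ :=
    exists_crossing_left (t := t) (τ := τ) (by linarith) (by nlinarith)
      (abs_le.mpr ⟨by nlinarith, by nlinarith⟩)
  -- the crossing with `BC` is the mirror image of the crossing with `AC` for the slope `-2t`
  obtain ⟨yR, hR₀, hR₁, hRt, hR⟩ :=
    exists_crossing_left (t := -t) (τ := τ) (by linarith) (by nlinarith)
      (abs_le.mpr ⟨by nlinarith, by nlinarith⟩)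
  refine ⟨(xP, 2 * t * xP - t ^ 2 + τ), (-yR, 2 * t * -yR - t ^ 2 + τ), ?_, ?_, rfl, rfl, ?_⟩
  · exact mem_segment_of_fst_mem_Icc (m := -2) (c := -1) (by norm_num [A]) (by norm_num [C])
      (by linear_combination hP) ⟨hP₀, hP₁⟩
  · rw [segment_symm]
    exact mem_segment_of_fst_mem_Icc (m := 2) (c := -1) (by norm_num [C]) (by norm_num [B])
      (by linear_combination hR) ⟨by simp [C]; linarith, by simp [B]; linarith⟩
  · exact mem_segment_of_fst_mem_Icc (m := 2 * t) (c := -t ^ 2 + τ) (by ring) (by ring)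
      (by simp only [Q]; ring) ⟨hPt, by simp only [Q]; linarith⟩

theorem stmt_18 (t τ δ : ℝ) (ht : |t| ≤ 1/2) (hτ : |τ| ≤ δ)
    (hδ0 : 0 < δ) (hδ : δ ≤ 1/8) :
    let A : ℝ × ℝ := (-1, 1)
    let B : ℝ × ℝ := (1, 1)
    let C : ℝ × ℝ := (0, -1)
    let Q : ℝ × ℝ := (t, t ^ 2 + τ)
    ∃ P R : ℝ × ℝ, P ∈ segment ℝ A C ∧ R ∈ segment ℝ B C ∧
      P.2 = 2 * t * P.1 - t ^ 2 + τ ∧ R.2 = 2 * t * R.1 - t ^ 2 + τ ∧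
      Q ∈ segment ℝ P R :=
  stmt_18_general t τ δ ht hτ hδ
end

section
/- If a bounded convex curve γ in the plane is the closure of the union of an increasing family of strictly convex polygonal chains γ_n whose edge lengths tend to 0, and γ contains a straight line segment l, then infinitely many vertices of the chains γ_n lie on l — contradicting strict convexity of each γ_n. Hence such a limit curve γ contains no straight line segment. -/
open Filter

/-- The polygonal chain with vertices `v 0, v 1, ..., v m`, as a subset of the plane. -/
def chainSet (v : ℕ → ℝ × ℝ) (m : ℕ) : Set (ℝ × ℝ) :=
  ⋃ i ∈ Finset.range m, segment ℝ (v i) (v (i + 1))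

/-!
Let `z` be the midpoint of a segment `[x, y]` in the boundary of the compact convex set `K`.
Near `z` the boundary of `K` is contained in a line. If `K` has empty interior, `K` itself lies
in a line. Otherwise take a supporting line `f = f z` at `z` and an interior point `p`: the line
passes through `x` and `y`, and a point of `K` near `z` with `f < f z` lies in the interior of
the triangle `x y p`, hence in the interior of `K`.

For large `n` the chain `γ_n` lies in `∂K`, is Hausdorff-close to `∂K` and has short edges, so
it has three consecutive vertices near `z`. They are then collinear, contradicting strict convexity.
-/

open Set Metric Topology Module

section

variable {E : Type*} [NormedAddCommGroup E] [NormedSpace ℝ E] {K : Set E}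

theorem Convex.exists_forall_le_of_notMem_interior (hK : Convex ℝ K)
    (hint : (interior K).Nonempty) {z : E} (hz : z ∉ interior K) :
    ∃ f : E →L[ℝ] ℝ, (∀ q ∈ K, f q ≤ f z) ∧ ∀ q ∈ interior K, f q < f z := by
  obtain ⟨f, hf⟩ := geometric_hahn_banach_open_point hK.interior isOpen_interior hz
  refine ⟨f, fun q hq => ?_, hf⟩
  have hq' : q ∈ closure (interior K) := by
    rw [hK.closure_interior_eq_closure_of_nonempty_interior hint]
    exact subset_closure hq
  exact closure_minimal (fun a ha => (hf a ha).le)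
    (isClosed_le f.continuous continuous_const) hq'

theorem affineIndependent_of_apply_eq_of_apply_ne {x y p : E} {f : E →L[ℝ] ℝ} (hxy : x ≠ y)
    (hfxy : f x = f y) (hfp : f p ≠ f x) : AffineIndependent ℝ ![x, y, p] := by
  rw [affineIndependent_iff_not_collinear_set]
  intro hcol
  obtain ⟨t, ht⟩ := mem_affineSpan_pair_iff_exists_lineMap_eq.1
    (hcol.mem_affineSpan_of_mem_of_ne (p₃ := p) (by simp) (by simp) (by simp) hxy)
  apply hfp
  rw [← ht, AffineMap.lineMap_apply_module, map_add, map_smul, map_smul, hfxy, smul_eq_mul,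
    smul_eq_mul]
  ring

theorem AffineBasis.apply_eq_sum_coord_smul {ι k V W F : Type*} [Fintype ι] [Ring k]
    [AddCommGroup V] [Module k V] [AddCommGroup W] [Module k W] [FunLike F V W]
    [LinearMapClass F k V W] (b : AffineBasis ι k V) (f : F) (q : V) :
    f q = ∑ i, b.coord i q • f (b i) := by
  conv_lhs => rw [← b.linear_combination_coord_eq_self q]
  simp only [map_sum, map_smul]

variable [FiniteDimensional ℝ E]

theorem collinear_setOf_apply_eq (hE : finrank ℝ E = 2) {f : E →L[ℝ] ℝ} (hf : f ≠ 0)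
    (c : ℝ) : Collinear ℝ {q | f q = c} := by
  have hf' : (f : E →ₗ[ℝ] ℝ) ≠ 0 := fun h => hf (ContinuousLinearMap.coe_injective h)
  have hker := Module.Dual.finrank_ker_add_one_of_ne_zero hf'
  have hspan : vectorSpan ℝ {q | f q = c} ≤ LinearMap.ker (f : E →ₗ[ℝ] ℝ) := by
    rw [vectorSpan_def, Submodule.span_le]
    rintro _ ⟨a, ha, b, hb, rfl⟩
    simp_all [vsub_eq_sub]
  rw [collinear_iff_finrank_le_one]
  have := Submodule.finrank_mono hspan
  omega

theorem Convex.collinear_of_interior_eq_empty (hE : finrank ℝ E = 2) (hK : Convex ℝ K)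
    (hint : interior K = ∅) : Collinear ℝ K := by
  rcases K.eq_empty_or_nonempty with rfl | hne
  · exact collinear_empty ℝ E
  have hspan : vectorSpan ℝ K ≠ ⊤ := fun h => by
    have := (hK.interior_nonempty_iff_affineSpan_eq_top).2
      ((AffineSubspace.affineSpan_eq_top_iff_vectorSpan_eq_top_of_nonempty ℝ E E hne).2 h)
    simp [hint] at this
  rw [collinear_iff_finrank_le_one]
  have := Submodule.finrank_lt hspan
  omega

theorem eventually_mem_interior_convexHull_of_apply_lt (hE : finrank ℝ E = 2) {x y p : E}
    {f : E →L[ℝ] ℝ} {c : ℝ} (hxy : x ≠ y) (hfx : f x = c) (hfy : f y = c)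
    (hfp : f p < c) :
    ∀ᶠ q in 𝓝 (midpoint ℝ x y), f q < c → q ∈ interior (convexHull ℝ {x, y, p}) := by
  have hind := affineIndependent_of_apply_eq_of_apply_ne (f := f) hxy (hfx.trans hfy.symm)
    (by linarith)
  have htot : affineSpan ℝ (range ![x, y, p]) = ⊤ := by
    rw [hind.affineSpan_eq_top_iff_card_eq_finrank_add_one, hE]; rfl
  let b : AffineBasis (Fin 3) ℝ E := ⟨![x, y, p], hind, htot⟩
  have hf : ∀ q, f q = c - (c - f p) * b.coord 2 q := by
    intro q
    have hsum := b.sum_coord_apply_eq_one q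
    rw [b.apply_eq_sum_coord_smul f q]
    simp only [Fin.sum_univ_three, smul_eq_mul] at hsum ⊢
    change _ * f x + _ * f y + _ * f p = _
    rw [hfx, hfy]
    linear_combination c * hsum
  have hz : midpoint ℝ x y = midpoint ℝ (b 0) (b 1) := rfl
  have hcoord : ∀ i : Fin 2, 0 < b.coord i.castSucc (midpoint ℝ x y) := by
    intro i
    rw [hz, AffineMap.map_midpoint]
    fin_cases i <;> norm_num [b.coord_apply_eq, b.coord_apply_ne, midpoint_eq_smul_add]
  have hev (i : Fin 2) : ∀ᶠ q in 𝓝 (midpoint ℝ x y), 0 < b.coord i.castSucc q :=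
    ((b.coord _).continuous_of_finiteDimensional.tendsto _).eventually (lt_mem_nhds (hcoord i))
  filter_upwards [hev 0, hev 1] with q hq0 hq1 hq
  have hrange : range b = {x, y, p} := by
    change range ![x, y, p] = _
    rw [Matrix.range_cons, Matrix.range_cons, Matrix.range_cons_empty]
    rfl
  rw [← hrange, b.interior_convexHull]
  intro i
  fin_cases i
  · exact hq0
  · exact hq1
  · have := hf q
    show 0 < b.coord 2 q
    nlinarith

theorem Convex.exists_collinear_frontier_inter_ball (hE : finrank ℝ E = 2) (hK : Convex ℝ K)
    (hKc : IsClosed K) {x y : E} (hxy : x ≠ y) (hseg : segment ℝ x y ⊆ frontier K) :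
    ∃ r > 0, Collinear ℝ (frontier K ∩ ball (midpoint ℝ x y) r) := by
  set z := midpoint ℝ x y
  have hfrK : frontier K ⊆ K := hKc.frontier_subset
  have hz : z ∉ interior K := (hseg (midpoint_mem_segment x y)).2
  rcases (interior K).eq_empty_or_nonempty with hint | ⟨p, hp⟩
  · exact ⟨1, one_pos,
      (hK.collinear_of_interior_eq_empty hE hint).subset (inter_subset_left.trans hfrK)⟩
  obtain ⟨f, hfK, hfint⟩ := hK.exists_forall_le_of_notMem_interior ⟨p, hp⟩ hz
  have hfx := hfK x (hfrK (hseg (left_mem_segment ℝ x y)))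
  have hfy := hfK y (hfrK (hseg (right_mem_segment ℝ x y)))
  have hfz : f z = (f x + f y) / 2 := by
    simp only [z, midpoint_eq_smul_add, map_smul, map_add, smul_eq_mul, invOf_eq_inv]
    ring
  have hfp := hfint p hp
  obtain ⟨r, hr, hball⟩ := Metric.eventually_nhds_iff_ball.1
    (eventually_mem_interior_convexHull_of_apply_lt hE hxy (by linarith) (by linarith) hfp)
  have hhull : convexHull ℝ {x, y, p} ⊆ K := convexHull_min (by
    simp only [insert_subset_iff, singleton_subset_iff]
    exact ⟨hfrK (hseg (left_mem_segment ℝ x y)), hfrK (hseg (right_mem_segment ℝ x y)),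
      interior_subset hp⟩) hK
  have hf0 : f ≠ 0 := by
    rintro rfl
    simp at hfp
  refine ⟨r, hr, (collinear_setOf_apply_eq hE hf0 (f z)).subset ?_⟩
  rintro a ⟨ha, haz⟩
  exact le_antisymm (hfK a (hfrK ha))
    (not_lt.1 fun hlt => ha.2 (interior_mono hhull (hball a haz hlt)))

end

theorem dist_left_le_of_mem_segment {E : Type*} [NormedAddCommGroup E] [NormedSpace ℝ E]
    {a b q : E} (hq : q ∈ segment ℝ a b) : dist a q ≤ dist a b := by
  linarith [dist_add_dist_of_mem_segment hq, dist_nonneg (x := q) (y := b)]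

theorem dist_right_le_of_mem_segment {E : Type*} [NormedAddCommGroup E] [NormedSpace ℝ E]
    {a b q : E} (hq : q ∈ segment ℝ a b) : dist b q ≤ dist a b := by
  linarith [dist_add_dist_of_mem_segment hq, dist_nonneg (x := a) (y := q), dist_comm b q]

section Chain

variable {v : ℕ → ℝ × ℝ} {m : ℕ} {ε : ℝ} {p : ℝ × ℝ}

theorem mem_chainSet : p ∈ chainSet v m ↔ ∃ i < m, p ∈ segment ℝ (v i) (v (i + 1)) := by
  simp [chainSet]

theorem apply_mem_chainSet {i : ℕ} (hm : 0 < m) (hi : i ≤ m) : v i ∈ chainSet v m := by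
  rw [mem_chainSet]
  rcases hi.lt_or_eq with hi | rfl
  · exact ⟨i, hi, left_mem_segment ℝ _ _⟩
  · obtain ⟨j, rfl⟩ := Nat.exists_eq_add_one_of_ne_zero hm.ne'
    exact ⟨j, j.lt_add_one, right_mem_segment ℝ _ _⟩

theorem exists_dist_lt_of_mem_chainSet (hε : ∀ i < m, dist (v i) (v (i + 1)) < ε)
    (hp : p ∈ chainSet v m) : ∃ i < m, dist (v i) p < ε ∧ dist (v (i + 1)) p < ε := by
  obtain ⟨i, hi, hseg⟩ := mem_chainSet.1 hp
  exact ⟨i, hi, (dist_left_le_of_mem_segment hseg).trans_lt (hε i hi),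
    (dist_right_le_of_mem_segment hseg).trans_lt (hε i hi)⟩

theorem exists_triple_subset_ball_of_mem_chainSet (hm : 2 ≤ m)
    (hε : ∀ i < m, dist (v i) (v (i + 1)) < ε) (hp : p ∈ chainSet v m) :
    ∃ j, j + 2 ≤ m ∧ {v j, v (j + 1), v (j + 2)} ⊆ ball p (2 * ε) := by
  obtain ⟨i, hi, h₀, h₁⟩ := exists_dist_lt_of_mem_chainSet hε hp
  have hε0 : 0 < ε := dist_nonneg.trans_lt h₀
  simp only [insert_subset_iff, singleton_subset_iff, mem_ball]
  rcases Nat.lt_or_ge (i + 1) m with him | him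
  · refine ⟨i, by omega, by linarith, by linarith, ?_⟩
    linarith [dist_triangle (v (i + 2)) (v (i + 1)) p, dist_comm (v (i + 2)) (v (i + 1)),
      hε (i + 1) him]
  · obtain ⟨j, rfl⟩ : ∃ j, i = j + 1 := ⟨i - 1, by omega⟩
    rw [show j + 1 + 1 = j + 2 from rfl] at h₁
    refine ⟨j, by omega, ?_, by linarith, by linarith⟩
    linarith [dist_triangle (v j) (v (j + 1)) p, hε j (by omega)]

theorem dist_lt_of_mem_chainSet_of_le_one (hm : m ≤ 1)
    (hε : ∀ i < m, dist (v i) (v (i + 1)) < ε) {q : ℝ × ℝ} (hp : p ∈ chainSet v m)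
    (hq : q ∈ chainSet v m) : dist p q < ε := by
  obtain ⟨i, hi, hpseg⟩ := mem_chainSet.1 hp
  obtain ⟨j, hj, hqseg⟩ := mem_chainSet.1 hq
  obtain rfl : i = 0 := by omega
  obtain rfl : j = 0 := by omega
  have : segment ℝ (v 0) (v 1) ⊆ closedBall p (dist (v 0) (v 1)) :=
    (convex_closedBall _ _).segment_subset
      (mem_closedBall.2 (dist_left_le_of_mem_segment hpseg))
      (mem_closedBall.2 (dist_right_le_of_mem_segment hpseg))
  exact (mem_closedBall'.1 (this hqseg)).trans_lt (hε 0 hi)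

theorem exists_triple_subset_ball_of_hausdorffDist_lt {S : Set (ℝ × ℝ)} {x z : ℝ × ℝ}
    (hx : x ∈ S) (hz : z ∈ S) (hfin : hausdorffEDist (chainSet v m) S ≠ ⊤)
    (hH : hausdorffDist (chainSet v m) S < ε) (hε : ∀ i < m, dist (v i) (v (i + 1)) < ε)
    (hxz : 3 * ε < dist x z) :
    ∃ j, j + 2 ≤ m ∧ {v j, v (j + 1), v (j + 2)} ⊆ ball z (3 * ε) := by
  obtain ⟨qz, hqz, hqzd⟩ := exists_dist_lt_of_hausdorffDist_lt' hz hH hfin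
  obtain ⟨qx, hqx, hqxd⟩ := exists_dist_lt_of_hausdorffDist_lt' hx hH hfin
  -- a chain with at most one edge is too short to pass near both `x` and `z`
  have hm : 2 ≤ m := by
    by_contra! hm
    have := dist_lt_of_mem_chainSet_of_le_one (by omega) hε hqx hqz
    linarith [dist_triangle4 x qx qz z, dist_comm x qx]
  obtain ⟨j, hj, hball⟩ := exists_triple_subset_ball_of_mem_chainSet hm hε hqz
  exact ⟨j, hj, hball.trans (ball_subset_ball' (by linarith))⟩

end Chain

theorem stmt_19
    (γ : Set (ℝ × ℝ)) (K : Set (ℝ × ℝ))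
    (hK : Convex ℝ K) (hKc : IsCompact K) (hγK : γ = frontier K)
    (v : ℕ → ℕ → ℝ × ℝ) (m : ℕ → ℕ)
    -- each chain is strictly convex: no three consecutive vertices are collinear
    (hstrict : ∀ n i, i + 2 ≤ m n →
      ¬ Collinear ℝ ({v n i, v n (i + 1), v n (i + 2)} : Set (ℝ × ℝ)))
    -- increasing family: every vertex of γ_n lies on the chain γ_{n+1}
    (hincr : ∀ n i, i ≤ m n → v n i ∈ chainSet (v (n + 1)) (m (n + 1)))
    -- the maximal edge length of γ_n tends to 0
    (hedge : ∀ ε : ℝ, 0 < ε → ∃ N, ∀ n, N ≤ n → ∀ i, i < m n →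
      dist (v n i) (v n (i + 1)) < ε)
    -- the chains converge to γ in Hausdorff distance
    (hconv : Tendsto (fun n => Metric.hausdorffDist (chainSet (v n) (m n)) γ)
      atTop (nhds 0))
    -- γ is the closure of the union of the chains
    (hγ : γ = closure (⋃ n, chainSet (v n) (m n))) :
    ∀ x y : ℝ × ℝ, x ≠ y → ¬ segment ℝ x y ⊆ γ := by
  intro x y hxy hseg
  subst hγK
  have hchain : ∀ n, chainSet (v n) (m n) ⊆ frontier K := fun n =>
    hγ ▸ (subset_iUnion (fun k => chainSet (v k) (m k)) n).trans subset_closure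
  obtain ⟨r, hr, hcol⟩ :=
    hK.exists_collinear_frontier_inter_ball (by simp) hKc.isClosed hxy hseg
  have hxz : 0 < dist x (midpoint ℝ x y) :=
    dist_pos.2 fun h => hxy ((left_eq_midpoint_iff ℝ).1 h)
  obtain ⟨δ, hδ, hδr, hδx⟩ :
      ∃ δ > 0, 3 * δ ≤ r ∧ 3 * δ < dist x (midpoint ℝ x y) :=
    ⟨min r (dist x (midpoint ℝ x y)) / 4, by positivity,
      by linarith [min_le_left r (dist x (midpoint ℝ x y))],
      by linarith [min_le_right r (dist x (midpoint ℝ x y))]⟩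
  obtain ⟨N₁, hN₁⟩ := eventually_atTop.1 (hconv.eventually (gt_mem_nhds hδ))
  obtain ⟨N₂, hN₂⟩ := hedge δ hδ
  -- `+ 1` so that `hincr` makes the chain nonempty: the empty chain has junk Hausdorff distance `0`
  set n := max N₁ N₂ + 1
  have hfin : hausdorffEDist (chainSet (v n) (m n)) (frontier K) ≠ ⊤ :=
    hausdorffEDist_ne_top_of_nonempty_of_bounded ⟨_, hincr _ 0 (Nat.zero_le _)⟩
      ⟨x, hseg (left_mem_segment ℝ x y)⟩
      (hKc.isBounded.subset ((hchain n).trans hKc.isClosed.frontier_subset))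
      (hKc.isBounded.subset hKc.isClosed.frontier_subset)
  obtain ⟨j, hj, hball⟩ := exists_triple_subset_ball_of_hausdorffDist_lt
    (hseg (left_mem_segment ℝ x y)) (hseg (midpoint_mem_segment x y)) hfin
    (hN₁ n (by omega)) (hN₂ n (by omega)) hδx
  refine hstrict n j hj (hcol.subset (subset_inter ?_ (hball.trans (ball_subset_ball hδr))))
  simp only [insert_subset_iff, singleton_subset_iff]
  exact ⟨hchain n (apply_mem_chainSet (by omega) (by omega)),
    hchain n (apply_mem_chainSet (by omega) (by omega)),
    hchain n (apply_mem_chainSet (by omega) hj)⟩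
end
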